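/- Let (s,i) be the solution of the controlled SIR system with control u and initial data i₀ ∈ (0,1), s₀ ∈ (0, 1−i₀]. If u is Lebesgue integrable on (0,∞) (i.e. ∫₀^∞ u(t) dt < ∞), then s_∞ := lim_{t→∞} s(t) satisfies s_∞ < γ/β. -/

import Mathlib

/-!
Both `s` and `i` stay positive: at a first zero `t₁` of a solution of `f' = c f` with `|c| ≤ C`,
one has `f ≤ C ∫_t^{t₁} f`, which forces `f = 0` on an interval of length `< 1 / C` before `t₁`.
Hence `s` decreases and `s + i = s₀ + i₀ - γ ∫₀ᵗ i` makes `i` integrable, so `i → 0`.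
If `s_∞ ≥ γ/β`, then `β s ≥ γ` along the whole trajectory and `i' ≥ -s₀ u i`. Choose `t₂` with
`∫_{t₂}^∞ u` small and let `t₃` maximise `i` on `[t₂, ∞)`; after `t₃` the solution `i` can lose at
most half of `i t₃`, contradicting `i → 0`.
-/

open MeasureTheory Filter Set intervalIntegral
open scoped ENNReal

noncomputable section

/-- A control: a measurable (essentially bounded) function with values in `[0, umax]`. -/
def IsControl (umax : ℝ) (u : ℝ → ℝ) : Prop :=
  Measurable u ∧ ∀ t : ℝ, u t ∈ Set.Icc (0 : ℝ) umax

/-- Solution of the controlled SIR system on `[0,∞)`, in integral (i.e. locally absolutely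
continuous) form: `s' = -(β-u)·s·i`, `i' = (β-u)·s·i - γ·i` a.e., `s 0 = s₀`, `i 0 = i₀`. -/
def SIRSol (β γ : ℝ) (u s i : ℝ → ℝ) (s₀ i₀ : ℝ) : Prop :=
  Continuous s ∧ Continuous i ∧
  (∀ t : ℝ, 0 ≤ t → s t = s₀ + ∫ τ in (0:ℝ)..t, -((β - u τ) * s τ * i τ)) ∧
  (∀ t : ℝ, 0 ≤ t → i t = i₀ + ∫ τ in (0:ℝ)..t, ((β - u τ) * s τ * i τ - γ * i τ))

/-- Solution of the controlled SIR system on `[0,T]`, in integral form. -/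
def SIRSolOn (β γ T : ℝ) (u s i : ℝ → ℝ) (s₀ i₀ : ℝ) : Prop :=
  ContinuousOn s (Set.Icc 0 T) ∧ ContinuousOn i (Set.Icc 0 T) ∧
  (∀ t ∈ Set.Icc (0:ℝ) T, s t = s₀ + ∫ τ in (0:ℝ)..t, -((β - u τ) * s τ * i τ)) ∧
  (∀ t ∈ Set.Icc (0:ℝ) T, i t = i₀ + ∫ τ in (0:ℝ)..t, ((β - u τ) * s τ * i τ - γ * i τ))

/-- The triangle `T = {(s,i) ∈ (0,1]² : s + i ≤ 1}`. -/
def Triangle : Set (ℝ × ℝ) :=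
  {p | 0 < p.1 ∧ p.1 ≤ 1 ∧ 0 < p.2 ∧ p.2 ≤ 1 ∧ p.1 + p.2 ≤ 1}

/-- The curve `Φ_max`. -/
def PhiMax (β γ umax iM : ℝ) (x : ℝ) : ℝ :=
  if x < γ / (β - umax) then iM
  else γ / (β - umax) + iM - x + (γ / (β - umax)) * (Real.log x - Real.log (γ / (β - umax)))

/-- The curve `Φ₀`. -/
def Phi0 (β γ iM : ℝ) (x : ℝ) : ℝ :=
  if x < γ / β then iM
  else γ / β + iM - x + (γ / β) * (Real.log x - Real.log (γ / β))

/-- The ICU (state) constraint `i(t) ≤ i_M` for all `t ≥ 0`. -/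
def Admissible (iM : ℝ) (i : ℝ → ℝ) : Prop := ∀ t : ℝ, 0 ≤ t → i t ≤ iM

/-- Infinite-horizon cost `J^∞(u) = ∫₀^∞ (λ₁ u + λ₂ i) dt`, with values in `[0,∞]`. -/
def Cost (l1 l2 : ℝ) (u i : ℝ → ℝ) : ℝ≥0∞ :=
  ∫⁻ t in Set.Ioi (0:ℝ), ENNReal.ofReal (l1 * u t + l2 * i t)

/-- Finite-horizon cost `J^T(u) = ∫₀^T (λ₁ u + λ₂ i) dt`. -/
def CostT (l1 l2 T : ℝ) (u i : ℝ → ℝ) : ℝ≥0∞ :=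
  ∫⁻ t in Set.Ioc (0:ℝ) T, ENNReal.ofReal (l1 * u t + l2 * i t)

/-- The safe (no-effort) zone `A`. -/
def SafeZone (β γ iM : ℝ) : Set (ℝ × ℝ) :=
  {p | p ∈ Triangle ∧ ∃ s i : ℝ → ℝ,
    SIRSol β γ (fun _ => 0) s i p.1 p.2 ∧ Admissible iM i}

/-- The viable (feasible) set `B`. -/
def ViableSet (β γ umax iM : ℝ) : Set (ℝ × ℝ) :=
  {p | p ∈ Triangle ∧ ∃ u s i : ℝ → ℝ, IsControl umax u ∧
    SIRSol β γ u s i p.1 p.2 ∧ Admissible iM i}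

/-- Weak* convergence in `L^∞(0,∞)`: testing against every `L¹` function. -/
def WeakStarLim (un : ℕ → ℝ → ℝ) (u : ℝ → ℝ) : Prop :=
  ∀ g : ℝ → ℝ, MeasureTheory.IntegrableOn g (Set.Ioi 0) →
    Filter.Tendsto (fun n => ∫ t in Set.Ioi (0:ℝ), un n t * g t) Filter.atTop
      (nhds (∫ t in Set.Ioi (0:ℝ), u t * g t))

open scoped Topology

theorem eq_zero_of_le_mul_integral {f : ℝ → ℝ} {a b C : ℝ} (hab : a ≤ b) (hC : 0 ≤ C)
    (hCab : C * (b - a) < 1) (hf : ContinuousOn f (Icc a b)) (hf0 : ∀ t ∈ Icc a b, 0 ≤ f t)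
    (hle : ∀ t ∈ Icc a b, f t ≤ C * ∫ τ in t..b, f τ) : ∀ t ∈ Icc a b, f t = 0 := by
  obtain ⟨t₀, ht₀, hmax⟩ := isCompact_Icc.exists_isMaxOn (nonempty_Icc.2 hab) hf
  have hint : ∫ τ in t₀..b, f τ ≤ (b - t₀) * f t₀ := by
    simpa using intervalIntegral.integral_mono_on ht₀.2
      ((hf.mono (Icc_subset_Icc_left ht₀.1)).intervalIntegrable_of_Icc ht₀.2)
      (intervalIntegrable_const (μ := volume)) fun τ hτ => hmax ⟨ht₀.1.trans hτ.1, hτ.2⟩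
  have hmax0 : f t₀ ≤ 0 := by
    have hlt : f t₀ ≤ C * (b - a) * f t₀ := calc
      f t₀ ≤ C * ∫ τ in t₀..b, f τ := hle t₀ ht₀
      _ ≤ C * ((b - t₀) * f t₀) := by gcongr
      _ ≤ C * ((b - a) * f t₀) := by gcongr; exacts [hf0 t₀ ht₀, ht₀.1]
      _ = C * (b - a) * f t₀ := by ring
    nlinarith [hf0 t₀ ht₀]
  exact fun t ht => le_antisymm ((hmax ht).trans hmax0) (hf0 t ht)

theorem exists_first_zero {f : ℝ → ℝ} (hf : Continuous f) {T : ℝ} (hT : 0 ≤ T) (h0 : 0 < f 0)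
    (hT0 : f T ≤ 0) : ∃ t₁ ∈ Ioc 0 T, f t₁ = 0 ∧ ∀ t ∈ Ico 0 t₁, 0 < f t := by
  have hzero : ∀ t, 0 ≤ t → f t ≤ 0 → ∃ z ∈ Icc 0 t, f z = 0 := fun t ht htf =>
    intermediate_value_Icc' ht hf.continuousOn ⟨htf, h0.le⟩
  set Z := Icc 0 T ∩ f ⁻¹' {0}
  have hZ : Z.Nonempty := hzero T hT hT0
  have hZbdd : BddBelow Z := ⟨0, fun t ht => ht.1.1⟩
  obtain ⟨⟨ht₁0, ht₁T⟩, ht₁⟩ : sInf Z ∈ Z :=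
    (isClosed_Icc.inter (isClosed_singleton.preimage hf)).csInf_mem hZ hZbdd
  refine ⟨sInf Z, ⟨ht₁0.lt_of_ne ?_, ht₁T⟩, ht₁, fun t ht => ?_⟩
  · rintro h
    rw [← h] at ht₁
    exact h0.ne' ht₁
  · by_contra! htf
    obtain ⟨z, hz, hfz⟩ := hzero t ht.1 htf
    exact (csInf_le hZbdd ⟨⟨hz.1, hz.2.trans (ht.2.le.trans ht₁T)⟩, hfz⟩).not_gt
      (hz.2.trans_lt ht.2)

theorem sub_eq_integral_of_eq_add_integral {f g : ℝ → ℝ} {x₀ : ℝ}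
    (hg : ∀ a b, IntervalIntegrable g volume a b)
    (heq : ∀ t, 0 ≤ t → f t = x₀ + ∫ τ in (0:ℝ)..t, g τ) {a b : ℝ} (ha : 0 ≤ a) (hb : 0 ≤ b) :
    f b - f a = ∫ τ in a..b, g τ := by
  rw [heq b hb, heq a ha, ← intervalIntegral.integral_interval_sub_left (hg 0 b) (hg 0 a)]
  ring

theorem pos_of_eq_add_integral_mul {f c : ℝ → ℝ} (hf : Continuous f)
    (hcf : ∀ a b, IntervalIntegrable (fun τ => c τ * f τ) volume a b)
    (hc : ∀ T, ∃ C, ∀ τ ∈ Icc 0 T, |c τ| ≤ C) (h0 : 0 < f 0)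
    (heq : ∀ t, 0 ≤ t → f t = f 0 + ∫ τ in (0:ℝ)..t, c τ * f τ) :
    ∀ t, 0 ≤ t → 0 < f t := by
  by_contra! ⟨T, hT, hfT⟩
  obtain ⟨t₁, ⟨ht₁0, -⟩, hft₁, hpos⟩ := exists_first_zero hf hT h0 hfT
  obtain ⟨C, hC⟩ := hc t₁
  have hC0 : 0 ≤ C := (abs_nonneg _).trans (hC 0 ⟨le_rfl, ht₁0.le⟩)
  have hnonneg : ∀ t ∈ Icc 0 t₁, 0 ≤ f t := fun t ht =>
    ht.2.eq_or_lt.elim (fun h => h ▸ hft₁.ge) fun h => (hpos t ⟨ht.1, h⟩).le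
  obtain ⟨a, ha0, hat₁, hCa⟩ : ∃ a, 0 ≤ a ∧ a < t₁ ∧ C * (t₁ - a) < 1 := by
    refine ⟨max 0 (t₁ - 1 / (C + 1)), le_max_left _ _, max_lt ht₁0 (by simp; positivity), ?_⟩
    have : t₁ - max 0 (t₁ - 1 / (C + 1)) ≤ 1 / (C + 1) := by
      linarith [le_max_right 0 (t₁ - 1 / (C + 1))]
    calc C * (t₁ - max 0 (t₁ - 1 / (C + 1))) ≤ C * (1 / (C + 1)) := by gcongr
      _ < 1 := by rw [mul_one_div, div_lt_one (by positivity)]; linarith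
  have hle : ∀ t ∈ Icc a t₁, f t ≤ C * ∫ τ in t..t₁, f τ := by
    intro t ht
    have ht0 : 0 ≤ t := ha0.trans ht.1
    have hdiff := sub_eq_integral_of_eq_add_integral hcf heq ht0 ht₁0.le
    rw [hft₁] at hdiff
    rw [← intervalIntegral.integral_const_mul]
    calc f t = ∫ τ in t..t₁, -(c τ * f τ) := by rw [intervalIntegral.integral_neg]; linarith
      _ ≤ ∫ τ in t..t₁, C * f τ := by
        refine intervalIntegral.integral_mono_on ht.2 (hcf t t₁).neg
          ((continuous_const.mul hf).intervalIntegrable _ _) fun τ hτ => ?_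
        have hτ' : τ ∈ Icc 0 t₁ := ⟨ht0.trans hτ.1, hτ.2⟩
        calc -(c τ * f τ) ≤ |c τ| * f τ := by
              rw [← neg_mul]; exact mul_le_mul_of_nonneg_right (neg_le_abs _) (hnonneg τ hτ')
          _ ≤ C * f τ := mul_le_mul_of_nonneg_right (hC τ hτ') (hnonneg τ hτ')
  have := eq_zero_of_le_mul_integral hat₁.le hC0 hCa hf.continuousOn
    (fun t ht => hnonneg t ⟨ha0.trans ht.1, ht.2⟩) hle a ⟨le_rfl, hat₁.le⟩
  exact (hpos a ⟨ha0, hat₁⟩).ne' this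

theorem exists_isMaxOn_Ici_of_tendsto_zero {f : ℝ → ℝ} (hf : Continuous f)
    (hlim : Tendsto f atTop (𝓝 0)) {a : ℝ} (ha : 0 < f a) : ∃ b ∈ Ici a, IsMaxOn f (Ici a) b := by
  have hg : Continuous fun t => f (max t a) := hf.comp (continuous_id.max continuous_const)
  obtain ⟨b, hb⟩ := hg.exists_forall_ge' a <| by
    rw [cocompact_eq_atBot_atTop]
    refine Filter.eventually_sup.2 ⟨?_, ?_⟩
    · filter_upwards [eventually_le_atBot a] with t ht
      rw [max_eq_right ht, max_self]
    · filter_upwards [hlim.eventually (gt_mem_nhds ha), eventually_ge_atTop a] with t ht hta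
      rw [max_eq_left hta, max_self]
      exact ht.le
  refine ⟨max b a, mem_Ici.2 (le_max_right _ _), fun t (ht : a ≤ t) => ?_⟩
  simpa [max_eq_left ht] using hb t

theorem not_tendsto_zero_of_neg_integral_le_sub {f w : ℝ → ℝ} (hf : Continuous f)
    (hpos : ∀ t, 0 ≤ t → 0 < f t) (hw : IntegrableOn w (Ioi 0)) (hw0 : ∀ t, 0 ≤ w t)
    (hsub : ∀ a b, 0 ≤ a → a ≤ b → -∫ τ in a..b, w τ * f τ ≤ f b - f a) :
    ¬ Tendsto f atTop (𝓝 0) := by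
  intro hlim
  obtain ⟨t₂, ht₂⟩ := eventually_atTop.1 <|
    ((tendsto_integral_Ioi_zero (f := w) tendsto_id).eventually (gt_mem_nhds one_half_pos)).and
      (eventually_ge_atTop 0)
  obtain ⟨t₃, ht₂₃ : t₂ ≤ t₃, hmax⟩ :=
    exists_isMaxOn_Ici_of_tendsto_zero hf hlim (hpos t₂ (ht₂ t₂ le_rfl).2)
  obtain ⟨htail, ht₃0⟩ := ht₂ t₃ ht₂₃
  -- beyond the maximum point `t₃`, `f` loses at most `f t₃ * ∫_{t₃}^∞ w < f t₃ / 2`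
  have hlower : ∀ t, t₃ ≤ t → f t₃ / 2 ≤ f t := by
    intro t ht
    have hwi : IntervalIntegrable w volume t₃ t :=
      (intervalIntegrable_iff_integrableOn_Ioc_of_le ht).2
        (hw.mono_set (Ioc_subset_Ioi_self.trans (Ioi_subset_Ioi ht₃0)))
    have hwt : ∫ τ in t₃..t, w τ ≤ 1 / 2 := by
      refine le_trans ?_ htail.le
      rw [intervalIntegral.integral_of_le ht]
      exact setIntegral_mono_set (hw.mono_set (Ioi_subset_Ioi ht₃0))
        (Eventually.of_forall hw0) Ioc_subset_Ioi_self.eventuallyLE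
    have hwf : ∫ τ in t₃..t, w τ * f τ ≤ (∫ τ in t₃..t, w τ) * f t₃ := by
      rw [← intervalIntegral.integral_mul_const]
      exact intervalIntegral.integral_mono_on ht (hwi.mul_continuousOn hf.continuousOn)
        (hwi.mul_const _) fun τ hτ =>
          mul_le_mul_of_nonneg_left (hmax (ht₂₃.trans hτ.1 : t₂ ≤ τ)) (hw0 τ)
    have hft₃ : 0 < f t₃ := hpos t₃ ht₃0
    nlinarith [hsub t₃ t ht₃0 ht]
  obtain ⟨t, ht, ht₃⟩ :=
    ((hlim.eventually (gt_mem_nhds (half_pos (hpos t₃ ht₃0)))).and (eventually_ge_atTop t₃)).exists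
  linarith [hlower t ht₃]

namespace IsControl

variable {umax : ℝ} {u : ℝ → ℝ}

theorem intervalIntegrable (hu : IsControl umax u) (a b : ℝ) :
    IntervalIntegrable u volume a b := by
  rw [intervalIntegrable_iff]
  refine Measure.integrableOn_of_bounded (M := umax) measure_Ioc_lt_top.ne
    hu.1.aestronglyMeasurable (Eventually.of_forall fun t => ?_)
  rw [Real.norm_eq_abs, abs_of_nonneg (hu.2 t).1]
  exact (hu.2 t).2

theorem exists_bound_mul (hu : IsControl umax u) (β : ℝ) {g : ℝ → ℝ} (hg : Continuous g)
    (T : ℝ) : ∃ C, ∀ τ ∈ Icc 0 T, |(β - u τ) * g τ| ≤ C := by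
  obtain ⟨M, hM⟩ := (isCompact_Icc (a := 0) (b := T)).exists_bound_of_continuousOn hg.continuousOn
  refine ⟨(|β| + umax) * M, fun τ hτ => ?_⟩
  have hβu : |β - u τ| ≤ |β| + umax := by
    linarith [abs_sub β (u τ), abs_of_nonneg (hu.2 τ).1, (hu.2 τ).2]
  rw [abs_mul]
  exact mul_le_mul hβu (hM τ hτ) (abs_nonneg _) ((abs_nonneg _).trans hβu)

end IsControl

namespace SIRSol

variable {β γ umax : ℝ} {u s i : ℝ → ℝ} {s₀ i₀ : ℝ}

theorem intervalIntegrable_incidence (hsol : SIRSol β γ u s i s₀ i₀) (hu : IsControl umax u)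
    (a b : ℝ) : IntervalIntegrable (fun τ => (β - u τ) * s τ * i τ) volume a b :=
  ((intervalIntegrable_const.sub (hu.intervalIntegrable a b)).mul_continuousOn
    hsol.1.continuousOn).mul_continuousOn hsol.2.1.continuousOn

theorem s_sub (hsol : SIRSol β γ u s i s₀ i₀) (hu : IsControl umax u) {a b : ℝ} (ha : 0 ≤ a)
    (hb : 0 ≤ b) : s b - s a = ∫ τ in a..b, -((β - u τ) * s τ * i τ) :=
  sub_eq_integral_of_eq_add_integral (fun a b => (hsol.intervalIntegrable_incidence hu a b).neg)
    hsol.2.2.1 ha hb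

theorem i_sub (hsol : SIRSol β γ u s i s₀ i₀) (hu : IsControl umax u) {a b : ℝ} (ha : 0 ≤ a)
    (hb : 0 ≤ b) : i b - i a = ∫ τ in a..b, ((β - u τ) * s τ * i τ - γ * i τ) :=
  sub_eq_integral_of_eq_add_integral (fun a b => (hsol.intervalIntegrable_incidence hu a b).sub
    ((continuous_const.mul hsol.2.1).intervalIntegrable a b)) hsol.2.2.2 ha hb

theorem s_zero (hsol : SIRSol β γ u s i s₀ i₀) : s 0 = s₀ := by
  simpa using hsol.2.2.1 0 le_rfl

theorem i_zero (hsol : SIRSol β γ u s i s₀ i₀) : i 0 = i₀ := by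
  simpa using hsol.2.2.2 0 le_rfl

theorem i_pos (hsol : SIRSol β γ u s i s₀ i₀) (hu : IsControl umax u) (hi₀ : 0 < i₀) :
    ∀ t, 0 ≤ t → 0 < i t := by
  have hc : ∀ τ, ((β - u τ) * s τ - γ) * i τ = (β - u τ) * s τ * i τ - γ * i τ := fun τ => by
    ring
  refine pos_of_eq_add_integral_mul (c := fun τ => (β - u τ) * s τ - γ) hsol.2.1
    (fun a b => ?_) (fun T => ?_) (hsol.i_zero ▸ hi₀) fun t ht => ?_
  · simp only [hc]
    exact (hsol.intervalIntegrable_incidence hu a b).sub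
      ((continuous_const.mul hsol.2.1).intervalIntegrable a b)
  · obtain ⟨C, hC⟩ := hu.exists_bound_mul β hsol.1 T
    exact ⟨C + |γ|, fun τ hτ => (abs_sub _ _).trans (add_le_add_left (hC τ hτ) _)⟩
  · simp only [hc, hsol.i_zero]
    exact hsol.2.2.2 t ht

theorem s_pos (hsol : SIRSol β γ u s i s₀ i₀) (hu : IsControl umax u) (hs₀ : 0 < s₀) :
    ∀ t, 0 ≤ t → 0 < s t := by
  have hc : ∀ τ, -((β - u τ) * i τ) * s τ = -((β - u τ) * s τ * i τ) := fun τ => by ring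
  refine pos_of_eq_add_integral_mul (c := fun τ => -((β - u τ) * i τ)) hsol.1
    (fun a b => ?_) (fun T => ?_) (hsol.s_zero ▸ hs₀) fun t ht => ?_
  · simp only [hc]
    exact (hsol.intervalIntegrable_incidence hu a b).neg
  · obtain ⟨C, hC⟩ := hu.exists_bound_mul β hsol.2.1 T
    exact ⟨C, fun τ hτ => (abs_neg _).trans_le (hC τ hτ)⟩
  · simp only [hc, hsol.s_zero]
    exact hsol.2.2.1 t ht

theorem antitoneOn_s (hsol : SIRSol β γ u s i s₀ i₀) (hu : IsControl umax u) (hβ : umax ≤ β)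
    (hs₀ : 0 < s₀) (hi₀ : 0 < i₀) : AntitoneOn s (Ici 0) := by
  intro a (ha : 0 ≤ a) b (hb : 0 ≤ b) hab
  have hinc : 0 ≤ ∫ τ in a..b, (β - u τ) * s τ * i τ :=
    intervalIntegral.integral_nonneg hab fun τ hτ =>
      mul_nonneg (mul_nonneg (by linarith [(hu.2 τ).2]) (hsol.s_pos hu hs₀ τ (ha.trans hτ.1)).le)
        (hsol.i_pos hu hi₀ τ (ha.trans hτ.1)).le
  have := hsol.s_sub hu ha hb
  rw [intervalIntegral.integral_neg] at this
  linarith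

theorem s_add_i (hsol : SIRSol β γ u s i s₀ i₀) (hu : IsControl umax u) {t : ℝ} (ht : 0 ≤ t) :
    s t + i t = s₀ + i₀ - γ * ∫ τ in (0:ℝ)..t, i τ := by
  have hs := hsol.s_sub hu le_rfl ht
  have hi := hsol.i_sub hu le_rfl ht
  rw [intervalIntegral.integral_neg] at hs
  rw [intervalIntegral.integral_sub (hsol.intervalIntegrable_incidence hu 0 t)
    ((continuous_const.mul hsol.2.1).intervalIntegrable 0 t) (f := fun τ => (β - u τ) * s τ * i τ)
    (g := fun τ => γ * i τ), intervalIntegral.integral_const_mul] at hi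
  rw [hsol.s_zero] at hs
  rw [hsol.i_zero] at hi
  linarith

theorem integrableOn_i (hsol : SIRSol β γ u s i s₀ i₀) (hu : IsControl umax u) (hγ : 0 < γ)
    (hs₀ : 0 < s₀) (hi₀ : 0 < i₀) : IntegrableOn i (Ioi 0) := by
  refine integrableOn_Ioi_of_intervalIntegral_norm_bounded ((s₀ + i₀) / γ) 0
    (fun t => hsol.2.1.integrableOn_Icc.mono_set Ioc_subset_Icc_self) tendsto_id ?_
  filter_upwards [eventually_ge_atTop 0] with t ht
  have hnorm : ∫ τ in (0:ℝ)..t, ‖i τ‖ = ∫ τ in (0:ℝ)..t, i τ :=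
    intervalIntegral.integral_congr fun τ hτ => by
      rw [uIcc_of_le ht] at hτ
      exact Real.norm_of_nonneg (hsol.i_pos hu hi₀ τ hτ.1).le
  rw [id, hnorm, le_div_iff₀' hγ]
  linarith [hsol.s_add_i hu ht, hsol.s_pos hu hs₀ t ht, hsol.i_pos hu hi₀ t ht]

theorem tendsto_i_zero (hsol : SIRSol β γ u s i s₀ i₀) (hu : IsControl umax u) (hγ : 0 < γ)
    (hs₀ : 0 < s₀) (hi₀ : 0 < i₀) {s_lim : ℝ} (hlim : Tendsto s atTop (𝓝 s_lim)) :
    Tendsto i atTop (𝓝 0) := by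
  have hint := hsol.integrableOn_i hu hγ hs₀ hi₀
  have hconv : Tendsto i atTop (𝓝 (s₀ + i₀ - s_lim - γ * ∫ τ in Ioi 0, i τ)) := by
    refine ((tendsto_const_nhds.sub hlim).sub
      ((intervalIntegral_tendsto_integral_Ioi 0 hint tendsto_id).const_mul γ)).congr' ?_
    filter_upwards [eventually_ge_atTop 0] with t ht
    simp only [id_eq]
    linarith [hsol.s_add_i hu ht]
  have hvol : ∀ S ∈ (atTop : Filter ℝ), volume S = ∞ := fun S hS => by
    obtain ⟨b, hb⟩ := mem_atTop_sets.1 hS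
    rw [← top_le_iff, ← Real.volume_Ici (a := b)]
    exact measure_mono hb
  rwa [IntegrableAtFilter.eq_zero_of_tendsto ⟨Ioi 0, Ioi_mem_atTop 0, hint⟩ hvol hconv] at hconv

theorem neg_integral_le_i_sub (hsol : SIRSol β γ u s i s₀ i₀) (hu : IsControl umax u)
    (hβ : umax ≤ β) (hs₀ : 0 < s₀) (hi₀ : 0 < i₀) (hγβ : ∀ t, 0 ≤ t → γ ≤ β * s t)
    {a b : ℝ} (ha : 0 ≤ a) (hab : a ≤ b) :
    -∫ τ in a..b, s₀ * u τ * i τ ≤ i b - i a := by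
  rw [hsol.i_sub hu ha (ha.trans hab), ← intervalIntegral.integral_neg]
  refine intervalIntegral.integral_mono_on hab
    ((((hu.intervalIntegrable a b).const_mul s₀).mul_continuousOn hsol.2.1.continuousOn).neg)
    ((hsol.intervalIntegrable_incidence hu a b).sub
      ((continuous_const.mul hsol.2.1).intervalIntegrable a b)) fun τ hτ => ?_
  have hτ0 : 0 ≤ τ := ha.trans hτ.1
  have hs : s τ ≤ s₀ := hsol.s_zero ▸ hsol.antitoneOn_s hu hβ hs₀ hi₀ self_mem_Ici hτ0 hτ0
  have hi := (hsol.i_pos hu hi₀ τ hτ0).le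
  -- the rate `(β - u) s - γ` is at least `-u s ≥ -s₀ u` while `β s ≥ γ`
  nlinarith [mul_nonneg (hu.2 τ).1 (sub_nonneg.2 hs), hγβ τ hτ0]

end SIRSol

theorem statement4_general (β γ umax : ℝ) (hβ : 0 < β) (hγ : 0 < γ)
    (humaxβ : umax < β)
    (u : ℝ → ℝ) (hu : IsControl umax u)
    (hL1 : MeasureTheory.IntegrableOn u (Set.Ioi 0))
    (i₀ s₀ : ℝ) (hi₀ : i₀ ∈ Set.Ioo (0:ℝ) 1) (hs₀ : s₀ ∈ Set.Ioc (0:ℝ) (1 - i₀))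
    (s i : ℝ → ℝ) (hsol : SIRSol β γ u s i s₀ i₀)
    (sInf : ℝ) (hlim : Filter.Tendsto s Filter.atTop (nhds sInf)) :
    sInf < γ / β := by
  have hanti := hsol.antitoneOn_s hu humaxβ.le hs₀.1 hi₀.1
  by_contra! hge
  have hγβ : ∀ t, 0 ≤ t → γ ≤ β * s t := fun t ht => by
    have hlim_le : sInf ≤ s t := le_of_tendsto hlim <| eventually_atTop.2
      ⟨t, fun x hx => hanti ht (ht.trans hx) hx⟩
    exact (div_le_iff₀' hβ).1 (hge.trans hlim_le)
  exact not_tendsto_zero_of_neg_integral_le_sub hsol.2.1 (hsol.i_pos hu hi₀.1)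
    (hL1.const_mul s₀) (fun t => mul_nonneg hs₀.1.le (hu.2 t).1)
    (fun a b ha hab => hsol.neg_integral_le_i_sub hu humaxβ.le hs₀.1 hi₀.1 hγβ ha hab)
    (hsol.tendsto_i_zero hu hγ hs₀.1 hi₀.1 hlim)

/-- If the control is integrable on `(0,∞)`, then herd immunity is reached:
`s_∞ < γ/β`. -/
theorem statement4 (β γ umax : ℝ) (hβ : 0 < β) (hγ : 0 < γ)
    (humax : 0 < umax) (humaxβ : umax < β)
    (u : ℝ → ℝ) (hu : IsControl umax u)
    (hL1 : MeasureTheory.IntegrableOn u (Set.Ioi 0))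
    (i₀ s₀ : ℝ) (hi₀ : i₀ ∈ Set.Ioo (0:ℝ) 1) (hs₀ : s₀ ∈ Set.Ioc (0:ℝ) (1 - i₀))
    (s i : ℝ → ℝ) (hsol : SIRSol β γ u s i s₀ i₀)
    (sInf : ℝ) (hlim : Filter.Tendsto s Filter.atTop (nhds sInf)) :
    sInf < γ / β :=
  statement4_general β γ umax hβ hγ humaxβ u hu hL1 i₀ s₀ hi₀ hs₀ s i hsol sInf hlim
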